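/- arXiv:1909.05817 — 4 statements merged into one kernel-verified Lean document; each statement's English description precedes it below -/
import Mathlib

section
/- Let (X,μ) be a probability space and (Eₙ) a sequence of measurable sets with ∑ₙ μ(Eₙ) = ∞. Suppose there is a constant C > 0 such that for all N ≥ M ≥ 1, ∑_{m,n=M}^{N} (μ(Eₘ ∩ Eₙ) − μ(Eₘ)μ(Eₙ)) ≤ C ∑_{n=M}^{N} μ(Eₙ). Then the set {x : x ∈ Eₙ for infinitely many n} has full μ-measure. -/
/-!
With `Φ_N = ∑_{n=1}^N 1_{E n}` and `S_N = ∑_{n=1}^N μ (E n)`, the counting function `Φ_N` has mean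
`S_N` and, by quasi-independence, variance at most `C S_N`. Chebyshev bounds
`μ {|Φ_N - S_N| ≥ S_N / 2}` by `4C / S_N`. Along a subsequence with `S_{N_k} ≥ (k + 1)²` these
bounds are summable, so by Borel–Cantelli almost every `x` has `Φ_{N_k} x > S_{N_k} / 2 → ∞`,
which is impossible if `x` lies in only finitely many `E n`.
-/

open MeasureTheory ProbabilityTheory Filter Finset

section SecondMoment

variable {X : Type*} [MeasurableSpace X] {μ : Measure X}

theorem measure_half_integral_le_abs_sub_le [IsFiniteMeasure μ] {f : X → ℝ} (hf : MemLp f 2 μ)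
    {C : ℝ} (hvar : variance f μ ≤ C * μ[f]) (hpos : 0 < μ[f]) :
    μ {x | μ[f] / 2 ≤ |f x - μ[f]|} ≤ ENNReal.ofReal (4 * C / μ[f]) := by
  refine (meas_ge_le_variance_div_sq hf (half_pos hpos)).trans (ENNReal.ofReal_le_ofReal ?_)
  calc variance f μ / (μ[f] / 2) ^ 2 ≤ C * μ[f] / (μ[f] / 2) ^ 2 := by gcongr
    _ = 4 * C / μ[f] := by field_simp; ring

theorem ae_eventually_half_integral_lt [IsFiniteMeasure μ] {f : ℕ → X → ℝ}
    (hf : ∀ k, MemLp (f k) 2 μ) {C : ℝ} (hvar : ∀ k, variance (f k) μ ≤ C * μ[f k])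
    (hpos : ∀ k, 0 < μ[f k]) (hsum : Summable fun k => (μ[f k])⁻¹) :
    ∀ᵐ x ∂μ, ∀ᶠ k in atTop, μ[f k] / 2 < f k x := by
  have hbound : ∑' k, μ {x | μ[f k] / 2 ≤ |f k x - μ[f k]|} ≠ ⊤ := by
    refine ne_top_of_le_ne_top ?_ (ENNReal.tsum_le_tsum fun k =>
      measure_half_integral_le_abs_sub_le (hf k) (hvar k) (hpos k))
    simpa only [ENNReal.ofReal, div_eq_mul_inv] using
      ENNReal.tsum_coe_ne_top_iff_summable.mpr (hsum.mul_left (4 * C)).toNNReal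
  filter_upwards [ae_eventually_notMem hbound] with x hx
  filter_upwards [hx] with k hk
  have := (abs_lt.mp (not_le.mp hk)).1
  linarith

end SecondMoment

section HitCount

variable {X : Type*} {E : ℕ → Set X}

noncomputable def hitCount (E : ℕ → Set X) (N : ℕ) : X → ℝ :=
  fun x => ∑ n ∈ Icc 1 N, (E n).indicator 1 x

theorem hitCount_le_ncard {x : X} (hfin : {n | x ∈ E n}.Finite) (N : ℕ) :
    hitCount E N x ≤ {n | x ∈ E n}.ncard := by
  classical
  simp only [hitCount, Set.indicator_apply, Pi.one_apply, sum_boole]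
  rw [← hfin.coe_toFinset, Set.ncard_coe_finset]
  exact_mod_cast card_le_card fun n hn => by simpa using (mem_filter.mp hn).2

theorem infinite_of_tendsto_hitCount {x : X} {φ : ℕ → ℕ}
    (h : Tendsto (fun k => hitCount E (φ k) x) atTop atTop) : {n | x ∈ E n}.Infinite := by
  intro hfin
  obtain ⟨k, hk⟩ := (h.eventually_gt_atTop ({n | x ∈ E n}.ncard : ℝ)).exists
  exact (hitCount_le_ncard hfin (φ k)).not_gt hk

variable [MeasurableSpace X] {μ : Measure X} [IsFiniteMeasure μ]

theorem memLp_hitCount (hE : ∀ n, MeasurableSet (E n)) (N : ℕ) : MemLp (hitCount E N) 2 μ :=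
  memLp_finsetSum _ fun n _ => memLp_indicator_const 2 (hE n) 1 (Or.inr (measure_ne_top μ _))

theorem integral_hitCount (hE : ∀ n, MeasurableSet (E n)) (N : ℕ) :
    μ[hitCount E N] = ∑ n ∈ Icc 1 N, μ.real (E n) := by
  unfold hitCount
  rw [integral_finsetSum _ fun n _ => (integrable_const 1).indicator (hE n)]
  exact sum_congr rfl fun n _ => integral_indicator_one (hE n)

theorem integral_hitCount_sq (hE : ∀ n, MeasurableSet (E n)) (N : ℕ) :
    μ[hitCount E N ^ 2] = ∑ m ∈ Icc 1 N, ∑ n ∈ Icc 1 N, μ.real (E m ∩ E n) := by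
  have hsq : hitCount E N ^ 2 =
      fun x => ∑ m ∈ Icc 1 N, ∑ n ∈ Icc 1 N, (E m ∩ E n).indicator 1 x := by
    ext x
    simp only [hitCount, Pi.pow_apply, sq, sum_mul_sum, Set.inter_indicator_one, Pi.mul_apply]
  have hint : ∀ m n, Integrable ((E m ∩ E n).indicator (1 : X → ℝ)) μ :=
    fun m n => (integrable_const 1).indicator ((hE m).inter (hE n))
  rw [hsq, integral_finsetSum _ fun m _ => integrable_finsetSum _ fun n _ => hint m n]
  refine sum_congr rfl fun m _ => ?_
  rw [integral_finsetSum _ fun n _ => hint m n]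
  exact sum_congr rfl fun n _ => integral_indicator_one ((hE m).inter (hE n))

theorem variance_hitCount [IsProbabilityMeasure μ] (hE : ∀ n, MeasurableSet (E n)) (N : ℕ) :
    variance (hitCount E N) μ =
      ∑ m ∈ Icc 1 N, ∑ n ∈ Icc 1 N, (μ.real (E m ∩ E n) - μ.real (E m) * μ.real (E n)) := by
  rw [variance_eq_sub (memLp_hitCount hE N), integral_hitCount_sq hE, integral_hitCount hE, sq,
    sum_mul_sum]
  simp only [sum_sub_distrib]

end HitCount

theorem tendsto_sum_Icc_measureReal_atTop {X : Type*} [MeasurableSpace X] {μ : Measure X}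
    [IsFiniteMeasure μ] {E : ℕ → Set X} (hdiv : ∑' n, μ (E n) = ⊤) :
    Tendsto (fun N => ∑ n ∈ Icc 1 N, μ.real (E n)) atTop atTop := by
  have hns : ¬ Summable fun n => μ.real (E (n + 1)) := by
    rw [summable_nat_add_iff (f := fun n => μ.real (E n)) 1]
    intro hs
    refine ENNReal.ofReal_ne_top (hdiv ▸ ?_ : ENNReal.ofReal (∑' n, μ.real (E n)) = ⊤)
    rw [ENNReal.ofReal_tsum_of_nonneg (fun n => measureReal_nonneg) hs]
    exact tsum_congr fun n => ofReal_measureReal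
  refine ((not_summable_iff_tendsto_nat_atTop_of_nonneg fun n => measureReal_nonneg).mp hns).congr
    fun N => ?_
  rw [← Ico_add_one_right_eq_Icc, sum_Ico_eq_sum_range]
  simp [add_comm]

theorem stmt_2_general {X : Type*} [MeasurableSpace X] (μ : Measure X) [IsProbabilityMeasure μ]
    (E : ℕ → Set X) (hE : ∀ n, MeasurableSet (E n))
    (hdiv : ∑' n, μ (E n) = ⊤)
    (C : ℝ)
    (hquasi : ∀ M N : ℕ, 1 ≤ M → M ≤ N →
      ∑ m ∈ Finset.Icc M N, ∑ n ∈ Finset.Icc M N,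
        ((μ (E m ∩ E n)).toReal - (μ (E m)).toReal * (μ (E n)).toReal)
      ≤ C * ∑ n ∈ Finset.Icc M N, (μ (E n)).toReal) :
    μ {x | {n : ℕ | x ∈ E n}.Infinite} = 1 := by
  obtain ⟨φ, hφ⟩ : ∃ φ : ℕ → ℕ, ∀ k : ℕ, ((k : ℝ) + 1) ^ 2 ≤ μ[hitCount E (φ k)] ∧ 1 ≤ φ k := by
    simp only [integral_hitCount hE]
    exact Classical.axiomOfChoice fun k =>
      ((tendsto_sum_Icc_measureReal_atTop hdiv).eventually_ge_atTop _
        |>.and (eventually_ge_atTop 1)).exists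
  have hpos (k : ℕ) : 0 < μ[hitCount E (φ k)] := lt_of_lt_of_le (by positivity) (hφ k).1
  have hsum : Summable fun k => (μ[hitCount E (φ k)])⁻¹ := by
    refine .of_nonneg_of_le (fun k => inv_nonneg.mpr (hpos k).le) (fun k => ?_)
      ((summable_nat_add_iff 1).mpr (Real.summable_nat_pow_inv.mpr one_lt_two))
    simpa using inv_anti₀ (by positivity) (hφ k).1
  have hvar (k : ℕ) : variance (hitCount E (φ k)) μ ≤ C * μ[hitCount E (φ k)] := by
    rw [variance_hitCount hE, integral_hitCount hE]
    exact hquasi 1 (φ k) le_rfl (hφ k).2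
  have hae := ae_eventually_half_integral_lt (fun k => memLp_hitCount hE (φ k)) hvar hpos hsum
  refine le_antisymm prob_le_one (measure_univ (μ := μ) ▸ measure_mono_ae ?_)
  filter_upwards [hae] with x hx _
  refine infinite_of_tendsto_hitCount (φ := φ)
    (tendsto_atTop_mono' _ (hx.mono fun k hk => hk.le) ?_)
  refine tendsto_atTop_mono (fun k => ?_) tendsto_natCast_atTop_atTop
  nlinarith [(hφ k).1]

theorem stmt_2 {X : Type*} [MeasurableSpace X] (μ : Measure X) [IsProbabilityMeasure μ]
    (E : ℕ → Set X) (hE : ∀ n, MeasurableSet (E n))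
    (hdiv : ∑' n, μ (E n) = ⊤)
    (C : ℝ) (hC : 0 < C)
    (hquasi : ∀ M N : ℕ, 1 ≤ M → M ≤ N →
      ∑ m ∈ Finset.Icc M N, ∑ n ∈ Finset.Icc M N,
        ((μ (E m ∩ E n)).toReal - (μ (E m)).toReal * (μ (E n)).toReal)
      ≤ C * ∑ n ∈ Finset.Icc M N, (μ (E n)).toReal) :
    μ {x | {n : ℕ | x ∈ E n}.Infinite} = 1 :=
  stmt_2_general μ E hE hdiv C hquasi
end

section
/- Let H be a Hilbert space, U: H → H a unitary operator, and f ∈ H. Suppose there exist constants D > 0 and σ > 0 such that |⟨Uⁱ f, f⟩| ≤ D‖f‖² · i·e^{−iσ} for all integers i ≥ 1. Then for β_n(f) = (1/n)∑_{j=1}^{n} U^{j} f one has ‖β_n(f)‖² ≤ (2/n)‖f‖²(1 + D∑_{i=1}^{∞} i e^{−iσ}), i.e. ‖β_n(f)‖ ≤ C‖f‖/√n for a constant C depending only on D and σ. -/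
/-!
Expanding the square, `‖∑_{j ∈ s} Uʲ f‖² ≤ ∑_{j,k ∈ s} |⟨Uʲ f, Uᵏ f⟩|`, and unitarity gives
`⟨Uʲ f, Uᵏ f⟩ = ⟨U^(j-k) f, f⟩`, whose modulus only depends on `|j - k|` since
`⟨U^(-i) f, f⟩ = conj ⟨Uⁱ f, f⟩`. If `|⟨Uⁱ f, f⟩| ≤ a i` with `a` summable, each row of the double
sum is then at most `2 ∑ a`, because every difference `|j - k|` occurs at most twice in a row.
-/

open Finset

section Correlation

variable {𝕜 H : Type*} [RCLike 𝕜] [NormedAddCommGroup H] [InnerProductSpace 𝕜 H]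

theorem norm_sum_sq_le_sum_sum_norm_inner {ι : Type*} (s : Finset ι) (v : ι → H) :
    ‖∑ i ∈ s, v i‖ ^ 2 ≤ ∑ i ∈ s, ∑ j ∈ s, ‖(inner 𝕜 (v i) (v j) : 𝕜)‖ := by
  rw [← inner_self_eq_norm_sq (𝕜 := 𝕜), sum_inner, map_sum]
  gcongr with i
  rw [inner_sum, map_sum]
  gcongr
  exact RCLike.re_le_norm _

theorem sum_natAbs_le_two_mul_tsum {a : ℕ → ℝ} (ha₀ : ∀ i, 0 ≤ a i) (ha : Summable a)
    (t : Finset ℤ) : ∑ m ∈ t, a m.natAbs ≤ 2 * ∑' i, a i := by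
  have h_natAbs_neg (n : ℕ) : (-(n + 1 : ℤ)).natAbs = n + 1 := by omega
  have h_nonneg : Summable fun n : ℕ => a (n : ℤ).natAbs := ha
  have h_neg : Summable fun n : ℕ => a (-(n + 1 : ℤ)).natAbs := by
    simpa only [h_natAbs_neg] using (summable_nat_add_iff 1).2 ha
  have h_shift : ∑' n, a (n + 1) ≤ ∑' i, a i :=
    tsum_comp_le_tsum_of_inj ha ha₀ (add_left_injective 1)
  calc ∑ m ∈ t, a m.natAbs ≤ ∑' m : ℤ, a m.natAbs :=
        (Summable.of_nat_of_neg_add_one (f := fun m : ℤ => a m.natAbs) h_nonneg h_neg).sum_le_tsum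
          t fun m _ => ha₀ _
    _ = ∑' i, a i + ∑' n, a (n + 1) := by
        rw [tsum_of_nat_of_neg_add_one (f := fun m : ℤ => a m.natAbs) h_nonneg h_neg]
        simp only [Int.natAbs_natCast, h_natAbs_neg]
    _ ≤ 2 * ∑' i, a i := by linarith

variable (U : H ≃ₗᵢ[𝕜] H) (f : H)

theorem inner_zpow_apply_zpow_apply (j k : ℤ) :
    (inner 𝕜 ((U ^ j) f) ((U ^ k) f) : 𝕜) = inner 𝕜 ((U ^ (j - k)) f) f := by
  have h_split : U ^ j = U ^ k * U ^ (j - k) := by rw [← zpow_add, add_sub_cancel]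
  rw [h_split, LinearIsometryEquiv.coe_mul, Function.comp_apply, LinearIsometryEquiv.inner_map_map]

theorem norm_inner_zpow_apply_self (m : ℤ) :
    ‖(inner 𝕜 ((U ^ m) f) f : 𝕜)‖ = ‖(inner 𝕜 ((U ^ m.natAbs) f) f : 𝕜)‖ := by
  obtain ⟨i, rfl | rfl⟩ := Int.eq_nat_or_neg m
  · simp
  · rw [Int.natAbs_neg, Int.natAbs_natCast, zpow_neg, zpow_natCast, LinearIsometryEquiv.coe_inv,
      ← (U ^ i).inner_map_map ((U ^ i).symm f) f, LinearIsometryEquiv.apply_symm_apply,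
      norm_inner_symm]

theorem norm_inner_pow_apply_pow_apply (j k : ℕ) :
    ‖(inner 𝕜 ((U ^ j) f) ((U ^ k) f) : 𝕜)‖
      = ‖(inner 𝕜 ((U ^ ((j : ℤ) - k).natAbs) f) f : 𝕜)‖ := by
  rw [← norm_inner_zpow_apply_self, ← inner_zpow_apply_zpow_apply, zpow_natCast, zpow_natCast]

theorem norm_sum_pow_apply_sq_le (s : Finset ℕ) {a : ℕ → ℝ} (ha : Summable a)
    (hcorr : ∀ i : ℕ, ‖(inner 𝕜 ((U ^ i) f) f : 𝕜)‖ ≤ a i) :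
    ‖∑ j ∈ s, (U ^ j) f‖ ^ 2 ≤ #s * (2 * ∑' i, a i) := by
  have ha₀ : ∀ i, 0 ≤ a i := fun i => (norm_nonneg _).trans (hcorr i)
  calc ‖∑ j ∈ s, (U ^ j) f‖ ^ 2
      ≤ ∑ j ∈ s, ∑ k ∈ s, ‖(inner 𝕜 ((U ^ j) f) ((U ^ k) f) : 𝕜)‖ :=
        norm_sum_sq_le_sum_sum_norm_inner s _
    _ ≤ ∑ j ∈ s, ∑ k ∈ s, a ((j : ℤ) - k).natAbs := by
        gcongr with j _ k _
        rw [norm_inner_pow_apply_pow_apply]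
        exact hcorr _
    _ ≤ ∑ _j ∈ s, 2 * ∑' i, a i := by
        gcongr with j _
        have h_inj : Set.InjOn (fun k : ℕ => (j : ℤ) - k) s := fun k _ l _ h => by
          simpa using h
        rw [← sum_image (g := fun k : ℕ => (j : ℤ) - k) (f := fun m => a m.natAbs) h_inj]
        exact sum_natAbs_le_two_mul_tsum ha₀ ha _
    _ = #s * (2 * ∑' i, a i) := by rw [sum_const, nsmul_eq_mul]

end Correlation

theorem stmt_4_general {H : Type*} [NormedAddCommGroup H] [InnerProductSpace ℂ H]
    (U : H ≃ₗᵢ[ℂ] H) (f : H) (D σ : ℝ) (hσ : 0 < σ)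
    (hcorr : ∀ i : ℕ, 1 ≤ i →
      ‖(inner ℂ ((U ^ i) f) f : ℂ)‖ ≤ D * ‖f‖ ^ 2 * ((i : ℝ) * Real.exp (-(i : ℝ) * σ))) :
    ∀ n : ℕ, 1 ≤ n →
      ‖(n : ℂ)⁻¹ • ∑ j ∈ Finset.Icc 1 n, (U ^ j) f‖ ^ 2
        ≤ (2 / (n : ℝ)) * ‖f‖ ^ 2 * (1 + D * ∑' i : ℕ, (i : ℝ) * Real.exp (-(i : ℝ) * σ)) := by
  intro n hn
  set w : ℕ → ℝ := fun i => (i : ℝ) * Real.exp (-(i : ℝ) * σ)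
  have hw : Summable w := by
    simpa [w, neg_mul, mul_comm σ] using Real.summable_pow_mul_exp_neg_nat_mul 1 hσ
  -- `a 0 = ‖f‖²` covers the diagonal term `⟨f, f⟩`, and then `2 ∑ a` is exactly the claimed constant.
  set a : ℕ → ℝ := fun i => (Pi.single 0 (‖f‖ ^ 2) : ℕ → ℝ) i + D * ‖f‖ ^ 2 * w i
  have ha : Summable a := (hasSum_pi_single 0 _).summable.add (hw.mul_left _)
  have hcorr' : ∀ i : ℕ, ‖(inner ℂ ((U ^ i) f) f : ℂ)‖ ≤ a i := by
    rintro (_ | i)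
    · simp [a, w, inner_self_eq_norm_sq_to_K]
    · exact (hcorr (i + 1) (Nat.le_add_left 1 i)).trans_eq
        (by simp only [a, w, Pi.single_eq_of_ne (Nat.succ_ne_zero i), zero_add])
  have h_tsum : ∑' i, a i = ‖f‖ ^ 2 * (1 + D * ∑' i, w i) := by
    rw [(hasSum_pi_single 0 _).summable.tsum_add (hw.mul_left _), tsum_pi_single, tsum_mul_left]
    ring
  have h_sum := norm_sum_pow_apply_sq_le U f (Icc 1 n) ha hcorr'
  rw [h_tsum, Nat.card_Icc, add_tsub_cancel_right] at h_sum
  have hn₀ : (n : ℝ) ≠ 0 := by positivity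
  calc ‖(n : ℂ)⁻¹ • ∑ j ∈ Icc 1 n, (U ^ j) f‖ ^ 2
      = (n : ℝ)⁻¹ ^ 2 * ‖∑ j ∈ Icc 1 n, (U ^ j) f‖ ^ 2 := by
        rw [norm_smul, mul_pow, norm_inv, Complex.norm_natCast]
    _ ≤ (n : ℝ)⁻¹ ^ 2 * (n * (2 * (‖f‖ ^ 2 * (1 + D * ∑' i, w i)))) := by gcongr
    _ = 2 / n * ‖f‖ ^ 2 * (1 + D * ∑' i, w i) := by field_simp

theorem stmt_4 {H : Type*} [NormedAddCommGroup H] [InnerProductSpace ℂ H]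
    (U : H ≃ₗᵢ[ℂ] H) (f : H) (D σ : ℝ) (hD : 0 < D) (hσ : 0 < σ)
    (hcorr : ∀ i : ℕ, 1 ≤ i →
      ‖(inner ℂ ((U ^ i) f) f : ℂ)‖ ≤ D * ‖f‖ ^ 2 * ((i : ℝ) * Real.exp (-(i : ℝ) * σ))) :
    ∀ n : ℕ, 1 ≤ n →
      ‖(n : ℂ)⁻¹ • ∑ j ∈ Finset.Icc 1 n, (U ^ j) f‖ ^ 2
        ≤ (2 / (n : ℝ)) * ‖f‖ ^ 2 * (1 + D * ∑' i : ℕ, (i : ℝ) * Real.exp (-(i : ℝ) * σ)) :=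
  stmt_4_general U f D σ hσ hcorr
end

section
/- Let (X,μ) be a probability space with a measure-preserving Z-action n ↦ gₙ, and let B₁ ⊇ B₂ ⊇ ⋯ be measurable. Set Eₙ = gₙ^{-1}(Bₙ). Suppose there are constants D > 0, σ > 0 such that |μ(Eₘ ∩ Eₙ) − μ(Eₘ)μ(Eₙ)| ≤ D√(μ(Bₘ)μ(Bₙ))·|n−m|·e^{−|n−m|σ} whenever m ≠ n. Then for all N ≥ M ≥ 1, ∑_{m,n=M}^{N} (μ(Eₘ∩Eₙ) − μ(Eₘ)μ(Eₙ)) ≤ (1 + 2D∑_{i=1}^{∞} i e^{−iσ}) · ∑_{n=M}^{N} μ(Bₙ). -/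
/-!
Split the double sum into the diagonal and the pairs `m < n`. On the diagonal
`μ(Eₘ) - μ(Eₘ)² ≤ μ(Eₘ) = μ(Bₘ)`. For `m < n` the nesting of the `Bₙ` gives
`√(μ(Bₘ)μ(Bₙ)) ≤ μ(Bₘ)`, so the pair `(m, n), (n, m)` contributes at most
`2D μ(Bₘ) w(n - m)` with `w i = i e^{-iσ}`; summing over `n > m` costs at most `∑' i, w i`.
-/

open MeasureTheory Finset

theorem sum_filter_lt_sub_le_tsum {w : ℕ → ℝ} (hw0 : ∀ i, 0 ≤ w i) (hw : Summable w)
    (I : Finset ℕ) (m : ℕ) :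
    ∑ n ∈ I with m < n, w (n - m) ≤ ∑' i, w i := by
  rw [← sum_image (g := (· - m)) fun x hx y hy hxy => by
    simp only [mem_coe, mem_filter] at hx hy hxy; omega]
  exact hw.sum_le_tsum _ fun i _ => hw0 i

theorem sum_sum_eq_sum_diag_add_sum_lt (I : Finset ℕ) (f : ℕ → ℕ → ℝ) :
    ∑ m ∈ I, ∑ n ∈ I, f m n
      = ∑ m ∈ I, f m m + ∑ m ∈ I, ∑ n ∈ I with m < n, (f m n + f n m) := by
  have hrow : ∀ m ∈ I, ∑ n ∈ I, f m n
      = f m m + ∑ n ∈ I with m < n, f m n + ∑ n ∈ I with n < m, f m n := by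
    intro m hm
    have hge : {n ∈ I | ¬n < m} = insert m {n ∈ I | m < n} := by
      ext n
      simp only [mem_filter, mem_insert]
      constructor
      · rintro ⟨hn, hnm⟩
        rcases (not_lt.1 hnm).eq_or_lt with rfl | hlt
        exacts [Or.inl rfl, Or.inr ⟨hn, hlt⟩]
      · rintro (rfl | ⟨hn, hlt⟩)
        exacts [⟨hm, lt_irrefl _⟩, ⟨hn, hlt.not_gt⟩]
    rw [← sum_filter_add_sum_filter_not I (· < m), hge, sum_insert (by simp)]
    ring
  have hswap : ∑ m ∈ I, ∑ n ∈ I with n < m, f m n = ∑ m ∈ I, ∑ n ∈ I with m < n, f n m :=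
    sum_comm' fun m n => by simp only [mem_filter]; tauto
  rw [sum_congr rfl hrow, sum_add_distrib, sum_add_distrib, hswap, add_assoc,
    ← sum_add_distrib]
  simp only [sum_add_distrib]

theorem sum_sum_le_of_diag_le_of_offDiag_le {I : Finset ℕ} {f : ℕ → ℕ → ℝ} {b w : ℕ → ℝ} {C : ℝ}
    (hC : 0 ≤ C) (hb : ∀ m, 0 ≤ b m) (hw0 : ∀ i, 0 ≤ w i) (hw : Summable w)
    (hdiag : ∀ m ∈ I, f m m ≤ b m)
    (hoff : ∀ m ∈ I, ∀ n ∈ I, m < n → f m n + f n m ≤ 2 * C * b m * w (n - m)) :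
    ∑ m ∈ I, ∑ n ∈ I, f m n ≤ (1 + 2 * C * ∑' i, w i) * ∑ m ∈ I, b m := by
  have hrow : ∀ m ∈ I, ∑ n ∈ I with m < n, (f m n + f n m) ≤ (2 * C * ∑' i, w i) * b m := by
    intro m hm
    calc ∑ n ∈ I with m < n, (f m n + f n m)
        ≤ ∑ n ∈ I with m < n, 2 * C * b m * w (n - m) :=
          sum_le_sum fun n hn => hoff m hm n (mem_filter.1 hn).1 (mem_filter.1 hn).2
      _ = 2 * C * b m * ∑ n ∈ I with m < n, w (n - m) := (mul_sum ..).symm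
      _ ≤ 2 * C * b m * ∑' i, w i := by
          gcongr
          · exact mul_nonneg (by positivity) (hb m)
          · exact sum_filter_lt_sub_le_tsum hw0 hw I m
      _ = (2 * C * ∑' i, w i) * b m := by ring
  rw [sum_sum_eq_sum_diag_add_sum_lt, add_mul, one_mul, mul_sum]
  exact add_le_add (sum_le_sum hdiag) (sum_le_sum hrow)

theorem abs_natCast_sub_natCast_of_le {m n : ℕ} (h : m ≤ n) :
    |(n : ℝ) - (m : ℝ)| = ((n - m : ℕ) : ℝ) := by
  rw [Nat.cast_sub h, abs_of_nonneg (sub_nonneg.2 (Nat.cast_le.2 h))]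

theorem sqrt_mul_le_left {a b : ℝ} (ha : 0 ≤ a) (hba : b ≤ a) :
    Real.sqrt (a * b) ≤ a :=
  (Real.sqrt_le_left ha).2 (by nlinarith)

theorem summable_natCast_mul_exp_neg_mul {σ : ℝ} (hσ : 0 < σ) :
    Summable fun i : ℕ => (i : ℝ) * Real.exp (-(i : ℝ) * σ) := by
  refine (Real.summable_pow_mul_exp_neg_nat_mul 1 hσ).congr fun i => ?_
  rw [pow_one, neg_mul, neg_mul, mul_comm σ]

theorem stmt_8 {X : Type*} [MeasurableSpace X] (μ : Measure X) [IsProbabilityMeasure μ]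
    (g : ℕ → X → X) (hg : ∀ n, MeasurePreserving (g n) μ μ)
    (B : ℕ → Set X) (hBm : ∀ n, MeasurableSet (B n)) (hBnest : Antitone B)
    (D σ : ℝ) (hD : 0 < D) (hσ : 0 < σ)
    (E : ℕ → Set X) (hE : ∀ n, E n = g n ⁻¹' (B n))
    (hcorr : ∀ m n : ℕ, m ≠ n →
      |(μ (E m ∩ E n)).toReal - (μ (E m)).toReal * (μ (E n)).toReal|
        ≤ D * Real.sqrt ((μ (B m)).toReal * (μ (B n)).toReal) *
            (|(n : ℝ) - (m : ℝ)| * Real.exp (-|(n : ℝ) - (m : ℝ)| * σ))) :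
    ∀ M N : ℕ, 1 ≤ M → M ≤ N →
      ∑ m ∈ Finset.Icc M N, ∑ n ∈ Finset.Icc M N,
        ((μ (E m ∩ E n)).toReal - (μ (E m)).toReal * (μ (E n)).toReal)
      ≤ (1 + 2 * D * ∑' i : ℕ, (i : ℝ) * Real.exp (-(i : ℝ) * σ)) *
          ∑ n ∈ Finset.Icc M N, (μ (B n)).toReal := by
  intro M N _ _
  set b : ℕ → ℝ := fun n => (μ (B n)).toReal
  have hb0 : ∀ n, 0 ≤ b n := fun n => ENNReal.toReal_nonneg
  have hEB : ∀ n, (μ (E n)).toReal = b n := fun n => by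
    rw [hE n, (hg n).measure_preimage (hBm n).nullMeasurableSet]
  refine sum_sum_le_of_diag_le_of_offDiag_le hD.le hb0 (fun i => by positivity)
    (summable_natCast_mul_exp_neg_mul hσ) (fun m _ => ?_) (fun m _ n _ hmn => ?_)
  · rw [Set.inter_self, hEB]
    nlinarith [mul_self_nonneg (b m)]
  · have hbmn : b n ≤ b m :=
      ENNReal.toReal_mono (measure_ne_top μ _) (measure_mono (hBnest hmn.le))
    have hcorr' := hcorr m n hmn.ne
    rw [abs_natCast_sub_natCast_of_le hmn.le] at hcorr'
    have hpair : ∀ x, |x| ≤ D * Real.sqrt (b m * b n) *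
        (((n - m : ℕ) : ℝ) * Real.exp (-((n - m : ℕ) : ℝ) * σ)) →
        x ≤ D * b m * (((n - m : ℕ) : ℝ) * Real.exp (-((n - m : ℕ) : ℝ) * σ)) := fun x hx =>
      (le_abs_self x).trans <| hx.trans <| by gcongr; exact sqrt_mul_le_left (hb0 m) hbmn
    rw [Set.inter_comm (E n), mul_comm (μ (E n)).toReal]
    linarith [hpair _ hcorr']
end

section
/- Let (X,μ) be a probability space with measure-preserving maps gₙ, and B₁ ⊇ B₂ ⊇ ⋯ measurable. Suppose there is a constant C > 0 such that μ(W_{m,n}) ≤ C/(m·μ(Bₙ)) for all m,n ≥ 1, where W_{m,n} = {x : gᵢ(x) ∉ Bₙ for 1 ≤ i ≤ m}. If there is an increasing sequence (n_j) in ℕ with ∑_j 1/(n_j·μ(B_{n_{j+1}})) < ∞, then the set of x ∈ X such that {g₁x,…,gₙx} ∩ Bₙ ≠ ∅ for all sufficiently large n has full μ-measure. -/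
/-!
A point outside the always-hitting set lies in `W_{n,n}` for infinitely many `n`. If
`n_j ≤ n < n_{j+1}`, then `W_{n,n} ⊆ W_{n_j, n_{j+1}}`, since missing `B_n` during the first `n`
steps means missing the smaller target `B_{n_{j+1}}` during the first `n_j` steps. So such a point
lies in infinitely many `W_{n_j, n_{j+1}}`, and these have summable measures
`μ(W_{n_j, n_{j+1}}) ≤ C / (n_j μ(B_{n_{j+1}}))`: Borel–Cantelli.
-/

open MeasureTheory Filter

section BorelCantelli

variable {α : Type*} [MeasurableSpace α] {μ : Measure α} [IsFiniteMeasure μ]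

theorem ae_eventually_notMem_of_toReal_le {s : ℕ → Set α} {b : ℕ → ℝ} (hb : Summable b)
    (hs : ∀ i, (μ (s i)).toReal ≤ b i) : ∀ᵐ x ∂μ, ∀ᶠ i in atTop, x ∉ s i := by
  refine ae_eventually_notMem <| ne_top_of_le_ne_top hb.tsum_ofReal_ne_top <|
    ENNReal.tsum_le_tsum fun i => ?_
  rw [← ENNReal.ofReal_toReal (measure_ne_top μ (s i))]
  exact ENNReal.ofReal_le_ofReal (hs i)

end BorelCantelli

theorem StrictMono.frequently_mem_of_frequently_mem_diag {X : Type*} {W : ℕ → ℕ → Set X}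
    (hW : ∀ ⦃m m' n n'⦄, m' ≤ m → n ≤ n' → W m n ⊆ W m' n') {t : ℕ → ℕ} (ht : StrictMono t)
    {x : X} (hx : ∃ᶠ n in atTop, x ∈ W n n) : ∃ᶠ j in atTop, x ∈ W (t j) (t (j + 1)) := by
  rw [frequently_atTop] at hx ⊢
  intro k
  obtain ⟨n, hkn, hn⟩ := hx (t (k + 1))
  obtain ⟨j, hjn, hnj⟩ := ht.exists_between_of_tendsto_atTop ht.tendsto_atTop
    (x := n + 1) (Nat.lt_succ_of_le ((ht.monotone k.succ.zero_le).trans hkn))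
  have hkj : k + 1 < j + 1 := ht.lt_iff_lt.1 (hkn.trans_lt hnj)
  exact ⟨j, by omega, hW (by omega) (by omega) hn⟩

/-- The set `W_{m,n}` of the paper. -/
def missSet {X : Type*} (g : ℕ → X → X) (B : ℕ → Set X) (m n : ℕ) : Set X :=
  {x | ∀ i, 1 ≤ i → i ≤ m → g i x ∉ B n}

section missSet

variable {X : Type*} {g : ℕ → X → X} {B : ℕ → Set X}

theorem mem_missSet_iff {x : X} {m n : ℕ} :
    x ∈ missSet g B m n ↔ ¬∃ i, 1 ≤ i ∧ i ≤ m ∧ g i x ∈ B n := by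
  simp [missSet]

theorem missSet_subset_missSet (hB : Antitone B) ⦃m m' n n' : ℕ⦄ (hm : m' ≤ m) (hn : n ≤ n') :
    missSet g B m n ⊆ missSet g B m' n' :=
  fun _ hx i hi him hB' => hx i hi (him.trans hm) (hB hn hB')

end missSet

theorem stmt_10_general {X : Type*} [MeasurableSpace X] (μ : Measure X) [IsProbabilityMeasure μ]
    (g : ℕ → X → X)
    (B : ℕ → Set X) (hBnest : Antitone B)
    (C : ℝ)
    (hW : ∀ m n : ℕ, 1 ≤ m → 1 ≤ n →
      (μ {x | ∀ i, 1 ≤ i → i ≤ m → g i x ∉ B n}).toReal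
        ≤ C / ((m : ℝ) * (μ (B n)).toReal))
    (nseq : ℕ → ℕ) (hmono : StrictMono nseq) (h1 : 1 ≤ nseq 0)
    (hsum : Summable (fun j : ℕ => 1 / ((nseq j : ℝ) * (μ (B (nseq (j + 1)))).toReal))) :
    μ {x | ∀ᶠ n in atTop, ∃ i, 1 ≤ i ∧ i ≤ n ∧ g i x ∈ B n} = 1 := by
  have hpos : ∀ j, 1 ≤ nseq j := fun j => h1.trans (hmono.monotone j.zero_le)
  have hbound : ∀ j, (μ (missSet g B (nseq j) (nseq (j + 1)))).toReal
      ≤ C * (1 / ((nseq j : ℝ) * (μ (B (nseq (j + 1)))).toReal)) := fun j =>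
    (hW _ _ (hpos j) (hpos (j + 1))).trans_eq (mul_one_div _ _).symm
  have hae := ae_eventually_notMem_of_toReal_le (hsum.mul_left C) hbound
  rw [← measure_univ (μ := μ)]
  refine measure_congr (ae_eq_univ.2 (hae.mono fun x hx => ?_))
  by_contra hx'
  rw [← not_frequently] at hx
  exact hx (hmono.frequently_mem_of_frequently_mem_diag (missSet_subset_missSet hBnest)
    ((not_eventually.1 hx').mono fun _ => mem_missSet_iff.2))

theorem stmt_10 {X : Type*} [MeasurableSpace X] (μ : Measure X) [IsProbabilityMeasure μ]
    (g : ℕ → X → X) (hg : ∀ n, MeasurePreserving (g n) μ μ)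
    (B : ℕ → Set X) (hBm : ∀ n, MeasurableSet (B n)) (hBnest : Antitone B)
    (C : ℝ) (hC : 0 < C)
    (hW : ∀ m n : ℕ, 1 ≤ m → 1 ≤ n →
      (μ {x | ∀ i, 1 ≤ i → i ≤ m → g i x ∉ B n}).toReal
        ≤ C / ((m : ℝ) * (μ (B n)).toReal))
    (nseq : ℕ → ℕ) (hmono : StrictMono nseq) (h1 : 1 ≤ nseq 0)
    (hsum : Summable (fun j : ℕ => 1 / ((nseq j : ℝ) * (μ (B (nseq (j + 1)))).toReal))) :
    μ {x | ∀ᶠ n in atTop, ∃ i, 1 ≤ i ∧ i ≤ n ∧ g i x ∈ B n} = 1 :=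
  stmt_10_general μ g B hBnest C hW nseq hmono h1 hsum
end
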